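/- If an α-approximate minimum-cost perfect matching M on the odd-degree vertices of a minimum spanning tree is used in Hoogeveen's Hamiltonian path algorithm, and the minimum-cost matching satisfies c(M*) ≤ (2/3)·c(H*) where H* is the optimal Hamiltonian path between the two specified endpoints, then the resulting Hamiltonian path H satisfies c(H) ≤ (1 + 2α/3)·c(H*). In particular α = 2 gives c(H) ≤ (7/3)·c(H*). -/

import Mathlib

/-- If Hoogeveen's Hamiltonian path algorithm is run with an `α`-approximate
minimum-cost perfect matching `M` (so `c(M) ≤ α·c(M*)`), where the optimal
matching satisfies `c(M*) ≤ (2/3)·c(H*)`, `c(MST) ≤ c(H*)`, and the output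
satisfies `c(H) ≤ c(MST) + c(M)`, then `c(H) ≤ (1 + 2α/3)·c(H*)`; in particular
`α = 2` gives `c(H) ≤ (7/3)·c(H*)`. -/
theorem hoogeveen_with_approx_matching
    (cH cMST cM cMstar cHstar α : ℝ) (hα : 0 ≤ α)
    (hMstar : cMstar ≤ 2 / 3 * cHstar)
    (hM : cM ≤ α * cMstar)
    (hMST : cMST ≤ cHstar)
    (hH : cH ≤ cMST + cM) :
    cH ≤ (1 + 2 * α / 3) * cHstar ∧ (α = 2 → cH ≤ 7 / 3 * cHstar) := by
  have hbound : cH ≤ (1 + 2 * α / 3) * cHstar :=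
    calc cH ≤ cMST + cM := hH
      _ ≤ cHstar + α * (2 / 3 * cHstar) :=
        add_le_add hMST (hM.trans (mul_le_mul_of_nonneg_left hMstar hα))
      _ = (1 + 2 * α / 3) * cHstar := by ring
  refine ⟨hbound, ?_⟩
  rintro rfl
  linarith
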